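/- arXiv:2004.02210 — 2 statements merged into one kernel-verified Lean document; each statement's English description precedes it below -/
import Mathlib

section
/- Under Assumption A, let k ∈ ℕ, λ > 0, ρ ∈ (0,1), and x_k ∈ ℝ^d. Then the second moment of ψ_k under the Gaussian measure N(x_k, ρ^k λ^{−1} I_d) satisfies the upper bound E[ψ_k²] ≤ exp(−2ρ^{−k} f*) · (λ/(2l+λ))^{d/2} · exp(−ρ^{−k} lλ‖x_k − x*‖₂² / (2l+λ)). -/
/-!
By the quadratic lower bound `f x ≥ f* + (l/2)‖x - x*‖²`, the integrand is at most
`exp(-2ρ⁻ᵏ f*)` times a product of two Gaussian factors centred at `x*` and `x_k`. Completing the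
square merges them into a single Gaussian of precision `a + b` (here `a = ρ⁻ᵏ l`,
`b = ρ⁻ᵏ λ / 2`) times `exp(-(a b / (a + b)) ‖x_k - x*‖²)`, and the Gaussian integral
`(π / (a + b))^(d/2)` cancels against the normalising constant up to `(λ / (2l + λ))^(d/2)`.
-/

open MeasureTheory Real Module

section InnerProductSpace

variable {E : Type*} [NormedAddCommGroup E] [InnerProductSpace ℝ E]

theorem mul_norm_sub_sq_add_mul_norm_sub_sq {a b : ℝ} (hab : a + b ≠ 0) (x y z : E) :
    a * ‖x - y‖ ^ 2 + b * ‖x - z‖ ^ 2 =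
      (a + b) * ‖x - (a + b)⁻¹ • (a • y + b • z)‖ ^ 2 + a * b / (a + b) * ‖y - z‖ ^ 2 := by
  have hcenter : (a + b) • (x - (a + b)⁻¹ • (a • y + b • z)) = a • (x - y) + b • (x - z) := by
    rw [smul_sub, smul_inv_smul₀ hab, add_smul]
    module
  have hcenter_sq : ‖x - (a + b)⁻¹ • (a • y + b • z)‖ ^ 2 =
      ‖a • (x - y) + b • (x - z)‖ ^ 2 / (a + b) ^ 2 := by
    rw [← hcenter, norm_smul, mul_pow, Real.norm_eq_abs, sq_abs]
    field_simp
  rw [hcenter_sq, show y - z = (x - z) - (x - y) by abel]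
  generalize x - y = u
  generalize x - z = v
  rw [norm_add_sq_real, norm_sub_sq_real, norm_smul, norm_smul, real_inner_smul_left,
    real_inner_smul_right, real_inner_comm u v, mul_pow, mul_pow, Real.norm_eq_abs,
    Real.norm_eq_abs, sq_abs, sq_abs]
  field_simp
  ring

variable [FiniteDimensional ℝ E] [MeasurableSpace E] [BorelSpace E]

theorem integrable_exp_neg_mul_sq_norm_sub {c : ℝ} (hc : 0 < c) (m : E) :
    Integrable (fun x : E => rexp (-c * ‖x - m‖ ^ 2)) := by
  have h : Integrable (fun x : E => rexp (-c * ‖x‖ ^ 2)) := by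
    simpa [Complex.norm_exp, ← Complex.ofReal_pow] using
      (GaussianFourier.integrable_cexp_neg_mul_sq_norm_add (V := E)
        (b := (c : ℂ)) (by simpa using hc) 0 (0 : E)).norm
  exact h.comp_sub_right m

theorem integral_exp_neg_mul_sq_norm_sub {c : ℝ} (hc : 0 < c) (m : E) :
    ∫ x : E, rexp (-c * ‖x - m‖ ^ 2) = (π / c) ^ (finrank ℝ E / 2 : ℝ) := by
  rw [integral_sub_right_eq_self (fun x : E => rexp (-c * ‖x‖ ^ 2)) m,
    GaussianFourier.integral_rexp_neg_mul_sq_norm hc]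

theorem integral_exp_neg_mul_exp_neg_mul_sq_norm_sub_le {g : E → ℝ} {g₀ a b : ℝ} {y : E}
    (ha : 0 < a) (hb : 0 < b) (hg : ∀ x, g₀ + a * ‖x - y‖ ^ 2 ≤ g x) (z : E) :
    ∫ x, rexp (-g x) * rexp (-b * ‖x - z‖ ^ 2) ≤
      rexp (-g₀) * rexp (-(a * b / (a + b)) * ‖y - z‖ ^ 2) *
        (π / (a + b)) ^ (finrank ℝ E / 2 : ℝ) := by
  have hab : 0 < a + b := add_pos ha hb
  set m : E := (a + b)⁻¹ • (a • y + b • z)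
  have hpointwise : ∀ x, rexp (-g x) * rexp (-b * ‖x - z‖ ^ 2) ≤
      rexp (-g₀) * rexp (-(a * b / (a + b)) * ‖y - z‖ ^ 2) *
        rexp (-(a + b) * ‖x - m‖ ^ 2) := by
    intro x
    simp only [← Real.exp_add, Real.exp_le_exp]
    linarith [hg x, mul_norm_sub_sq_add_mul_norm_sub_sq hab.ne' x y z]
  calc ∫ x, rexp (-g x) * rexp (-b * ‖x - z‖ ^ 2)
      ≤ ∫ x, rexp (-g₀) * rexp (-(a * b / (a + b)) * ‖y - z‖ ^ 2) *
          rexp (-(a + b) * ‖x - m‖ ^ 2) :=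
        integral_mono_of_nonneg (.of_forall fun x => by positivity)
          ((integrable_exp_neg_mul_sq_norm_sub hab m).const_mul _) (.of_forall hpointwise)
    _ = _ := by rw [integral_const_mul, integral_exp_neg_mul_sq_norm_sub hab]

end InnerProductSpace

theorem Epsi_sq_upper_bound_general
    (d : ℕ)
    (f : EuclideanSpace ℝ (Fin d) → ℝ)
    (xs : EuclideanSpace ℝ (Fin d)) (l : ℝ) (hl : 0 < l)
    (hlow : ∀ x, f xs + l / 2 * ‖x - xs‖ ^ 2 ≤ f x)
    (k : ℕ) (lam ρ : ℝ) (hlam : 0 < lam) (hρ0 : 0 < ρ)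
    (xk : EuclideanSpace ℝ (Fin d))
    (Eψ2 : ℝ)
    (hEψ2 : Eψ2 = ((ρ ^ k)⁻¹ * lam / (2 * π)) ^ ((d : ℝ) / 2) *
      ∫ x : EuclideanSpace ℝ (Fin d),
        Real.exp (-(2 * (ρ ^ k)⁻¹ * f x)) *
          Real.exp (-((ρ ^ k)⁻¹ * lam * ‖x - xk‖ ^ 2 / 2))) :
    Eψ2 ≤ Real.exp (-(2 * (ρ ^ k)⁻¹ * f xs)) * (lam / (2 * l + lam)) ^ ((d : ℝ) / 2) *
        Real.exp (-((ρ ^ k)⁻¹ * l * lam * ‖xk - xs‖ ^ 2 / (2 * l + lam))) := by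
  set α := (ρ ^ k)⁻¹
  have hα : 0 < α := by positivity
  have hg : ∀ x, 2 * α * f xs + α * l * ‖x - xs‖ ^ 2 ≤ 2 * α * f x := fun x => by
    nlinarith [hlow x]
  have hbound := integral_exp_neg_mul_exp_neg_mul_sq_norm_sub_le (mul_pos hα hl)
    (by positivity : 0 < α * lam / 2) hg xk
  simp only [finrank_euclideanSpace_fin] at hbound
  have hconst : (α * lam / (2 * π)) ^ ((d : ℝ) / 2) * (π / (α * l + α * lam / 2)) ^ ((d : ℝ) / 2)
      = (lam / (2 * l + lam)) ^ ((d : ℝ) / 2) := by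
    rw [← Real.mul_rpow (by positivity) (by positivity)]
    congr 1
    field_simp
  have hexponent : -(α * l * (α * lam / 2) / (α * l + α * lam / 2)) * ‖xs - xk‖ ^ 2
      = -(α * l * lam * ‖xk - xs‖ ^ 2 / (2 * l + lam)) := by
    rw [norm_sub_rev]
    field_simp
  calc Eψ2 = (α * lam / (2 * π)) ^ ((d : ℝ) / 2) * ∫ x, rexp (-(2 * α * f x)) *
        rexp (-(α * lam / 2) * ‖x - xk‖ ^ 2) := by
        rw [hEψ2]; congr 2 with x; ring_nf
    _ ≤ (α * lam / (2 * π)) ^ ((d : ℝ) / 2) * (rexp (-(2 * α * f xs)) *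
          rexp (-(α * l * (α * lam / 2) / (α * l + α * lam / 2)) * ‖xs - xk‖ ^ 2) *
          (π / (α * l + α * lam / 2)) ^ ((d : ℝ) / 2)) :=
        mul_le_mul_of_nonneg_left hbound (by positivity)
    _ = _ := by rw [← hconst, hexponent]; ring

/-- Upper bound for `E[ψ_k²]` (from the proof of Lemma 3.4). -/
theorem Epsi_sq_upper_bound
    (d : ℕ) (hd : 1 ≤ d)
    (f : EuclideanSpace ℝ (Fin d) → ℝ) (hf : Measurable f)
    (xs : EuclideanSpace ℝ (Fin d)) (l L : ℝ) (hl : 0 < l) (hlL : l ≤ L)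
    (hlow : ∀ x, f xs + l / 2 * ‖x - xs‖ ^ 2 ≤ f x)
    (hup : ∀ x, f x ≤ f xs + L / 2 * ‖x - xs‖ ^ 2)
    (k : ℕ) (lam ρ : ℝ) (hlam : 0 < lam) (hρ0 : 0 < ρ) (hρ1 : ρ < 1)
    (xk : EuclideanSpace ℝ (Fin d))
    (Eψ2 : ℝ)
    (hEψ2 : Eψ2 = ((ρ ^ k)⁻¹ * lam / (2 * π)) ^ ((d : ℝ) / 2) *
      ∫ x : EuclideanSpace ℝ (Fin d),
        Real.exp (-(2 * (ρ ^ k)⁻¹ * f x)) *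
          Real.exp (-((ρ ^ k)⁻¹ * lam * ‖x - xk‖ ^ 2 / 2))) :
    Eψ2 ≤ Real.exp (-(2 * (ρ ^ k)⁻¹ * f xs)) * (lam / (2 * l + lam)) ^ ((d : ℝ) / 2) *
        Real.exp (-((ρ ^ k)⁻¹ * l * lam * ‖xk - xs‖ ^ 2 / (2 * l + lam))) :=
  Epsi_sq_upper_bound_general d f xs l hl hlow k lam ρ hlam hρ0 xk Eψ2 hEψ2
end

section
/- Under Assumption A, let k ∈ ℕ, λ > 0, ρ ∈ (0,1), and x_k ∈ ℝ^d. Then the second moment of φ_k under the Gaussian measure N(x_k, ρ^k λ^{−1} I_d) satisfies the upper bound E[φ_k²] ≤ exp(−2ρ^{−k} f*) · (λ/(2l+λ))^{d/2} · exp(−ρ^{−k} lλ‖x_k − x*‖₂² / (2l+λ)) · (ρ^k d/(2l+λ) + λ²‖x_k − x*‖₂²/(2l+λ)²). -/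
/-!
The lower quadratic bound on `f` reduces the integrand to `‖x - x*‖²` times a single Gaussian:
completing the square,
`l ‖x - x*‖² + (λ/2) ‖x - x_k‖² = (l + λ/2) ‖x - m‖² + (l λ / (2l + λ)) ‖x_k - x*‖²`
with `m = x* + (λ / (2l + λ)) (x_k - x*)`. What is left is the second moment of a Gaussian about
a point other than its centre, `∫ ‖x - p‖² e^{-c ‖x - m‖²} = (d / (2c) + ‖m - p‖²) (π / c)^{d/2}`,
whose isotropic part `d / (2c)` comes from the radial formula and `Γ(s + 1) = s Γ(s)`.
-/

open MeasureTheory Real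

section GaussianMoments

variable {V : Type*} [NormedAddCommGroup V] [InnerProductSpace ℝ V] [FiniteDimensional ℝ V]
  [MeasurableSpace V] [BorelSpace V] {c : ℝ}

theorem integrable_exp_neg_mul_sq_norm (hc : 0 < c) :
    Integrable fun v : V => rexp (-c * ‖v‖ ^ 2) :=
  .of_integral_ne_zero <| by
    rw [GaussianFourier.integral_rexp_neg_mul_sq_norm hc]; positivity

theorem sq_mul_exp_neg_mul_sq_le (hc : 0 < c) (t : ℝ) :
    t ^ 2 * rexp (-c * t ^ 2) ≤ 2 / c * rexp (-(c / 2) * t ^ 2) := by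
  have : t ^ 2 ≤ 2 / c * rexp (c / 2 * t ^ 2) := by
    rw [div_mul_eq_mul_div, le_div_iff₀ hc]; linarith [add_one_le_exp (c / 2 * t ^ 2)]
  calc t ^ 2 * rexp (-c * t ^ 2) ≤ 2 / c * rexp (c / 2 * t ^ 2) * rexp (-c * t ^ 2) := by
        gcongr
    _ = 2 / c * rexp (-(c / 2) * t ^ 2) := by rw [mul_assoc, ← exp_add]; ring_nf

theorem integrable_sq_norm_mul_exp_neg_mul_sq_norm (hc : 0 < c) :
    Integrable fun v : V => ‖v‖ ^ 2 * rexp (-c * ‖v‖ ^ 2) :=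
  ((integrable_exp_neg_mul_sq_norm (half_pos hc)).const_mul (2 / c)).mono'
    (by fun_prop) (.of_forall fun v => by
      rw [norm_of_nonneg (by positivity)]; exact sq_mul_exp_neg_mul_sq_le hc ‖v‖)

theorem integrable_norm_add_sq_mul_exp_neg_mul_sq_norm (hc : 0 < c) (w : V) :
    Integrable fun v : V => ‖v + w‖ ^ 2 * rexp (-c * ‖v‖ ^ 2) := by
  refine (((integrable_sq_norm_mul_exp_neg_mul_sq_norm hc).add
    ((integrable_exp_neg_mul_sq_norm hc).const_mul (‖w‖ ^ 2))).const_mul 2).mono'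
    (by fun_prop) (.of_forall fun v => ?_)
  have hnorm : ‖v + w‖ ^ 2 ≤ 2 * (‖v‖ ^ 2 + ‖w‖ ^ 2) := by
    nlinarith [norm_add_le v w, norm_nonneg (v + w), sq_nonneg (‖v‖ - ‖w‖)]
  rw [norm_of_nonneg (by positivity)]
  calc ‖v + w‖ ^ 2 * rexp (-c * ‖v‖ ^ 2) ≤ 2 * (‖v‖ ^ 2 + ‖w‖ ^ 2) * rexp (-c * ‖v‖ ^ 2) := by
        gcongr
    _ = _ := by simp only [Pi.add_apply]; ring

theorem integral_pow_add_two_mul_exp_neg_mul_sq_Ioi (hc : 0 < c) (n : ℕ) :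
    ∫ t in Set.Ioi (0 : ℝ), t ^ (n + 2) * rexp (-c * t ^ 2) =
      (n + 1) / (2 * c) * ∫ t in Set.Ioi (0 : ℝ), t ^ n * rexp (-c * t ^ 2) := by
  have key (m : ℕ) : ∫ t in Set.Ioi (0 : ℝ), t ^ m * rexp (-c * t ^ 2) =
      c ^ (-((m : ℝ) + 1) / 2) * (1 / 2) * Gamma (((m : ℝ) + 1) / 2) := by
    rw [← integral_rpow_mul_exp_neg_mul_rpow two_pos (by linarith [m.cast_nonneg (α := ℝ)]) hc]
    refine setIntegral_congr_fun measurableSet_Ioi fun t _ => ?_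
    simp only [rpow_natCast, ← rpow_two]
  have hn : ((n : ℝ) + 1) / 2 ≠ 0 := by positivity
  rw [key, key, show ((n + 2 : ℕ) : ℝ) + 1 = (n + 1) + 2 by push_cast; ring,
    show ((n : ℝ) + 1 + 2) / 2 = (n + 1) / 2 + 1 by ring, Gamma_add_one hn,
    show -((n : ℝ) + 1 + 2) / 2 = -(n + 1) / 2 + -1 by ring, rpow_add hc, rpow_neg_one]
  field_simp

theorem integral_sq_norm_mul_exp_neg_mul_sq_norm (hc : 0 < c) :
    ∫ v : V, ‖v‖ ^ 2 * rexp (-c * ‖v‖ ^ 2) =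
      Module.finrank ℝ V / (2 * c) * (π / c) ^ (Module.finrank ℝ V / 2 : ℝ) := by
  rcases subsingleton_or_nontrivial V with hV | hV
  · simp [Subsingleton.elim _ (0 : V), Module.finrank_zero_of_subsingleton]
  rw [← GaussianFourier.integral_rexp_neg_mul_sq_norm hc,
    integral_fun_norm_addHaar volume (fun t => t ^ 2 * rexp (-c * t ^ 2)),
    integral_fun_norm_addHaar volume (fun t => rexp (-c * t ^ 2))]
  obtain ⟨n, hn⟩ : ∃ n, Module.finrank ℝ V = n + 1 :=
    Nat.exists_eq_succ_of_ne_zero Module.finrank_pos.ne'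
  simp only [hn, add_tsub_cancel_right, smul_eq_mul, ← mul_assoc, ← pow_add]
  rw [integral_pow_add_two_mul_exp_neg_mul_sq_Ioi hc]
  push_cast
  ring

theorem integral_norm_add_sq_mul_exp_neg_mul_sq_norm (hc : 0 < c) (w : V) :
    ∫ v : V, ‖v + w‖ ^ 2 * rexp (-c * ‖v‖ ^ 2) =
      (Module.finrank ℝ V / (2 * c) + ‖w‖ ^ 2) * (π / c) ^ (Module.finrank ℝ V / 2 : ℝ) := by
  -- Averaging over `±w`, the parallelogram law cancels the cross term.
  have hsymm : ∫ v : V, ‖v - w‖ ^ 2 * rexp (-c * ‖v‖ ^ 2) =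
      ∫ v : V, ‖v + w‖ ^ 2 * rexp (-c * ‖v‖ ^ 2) := by
    rw [← integral_neg_eq_self]
    congr 1 with v
    rw [show -v - w = -(v + w) by abel, norm_neg, norm_neg]
  have hpar : ∀ v : V, ‖v + w‖ ^ 2 * rexp (-c * ‖v‖ ^ 2) + ‖v - w‖ ^ 2 * rexp (-c * ‖v‖ ^ 2) =
      2 * (‖v‖ ^ 2 * rexp (-c * ‖v‖ ^ 2) + ‖w‖ ^ 2 * rexp (-c * ‖v‖ ^ 2)) := fun v => by
    linear_combination rexp (-c * ‖v‖ ^ 2) * parallelogram_law_with_norm ℝ v w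
  have hint_sub : Integrable fun v : V => ‖v - w‖ ^ 2 * rexp (-c * ‖v‖ ^ 2) := by
    simpa only [← sub_eq_add_neg] using integrable_norm_add_sq_mul_exp_neg_mul_sq_norm hc (-w)
  calc ∫ v : V, ‖v + w‖ ^ 2 * rexp (-c * ‖v‖ ^ 2)
      = ((∫ v : V, ‖v + w‖ ^ 2 * rexp (-c * ‖v‖ ^ 2)) +
          ∫ v : V, ‖v - w‖ ^ 2 * rexp (-c * ‖v‖ ^ 2)) / 2 := by rw [hsymm]; ring
    _ = (∫ v : V, 2 * (‖v‖ ^ 2 * rexp (-c * ‖v‖ ^ 2) + ‖w‖ ^ 2 * rexp (-c * ‖v‖ ^ 2))) / 2 := by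
      rw [← integral_add (integrable_norm_add_sq_mul_exp_neg_mul_sq_norm hc w) hint_sub]
      simp only [hpar]
    _ = _ := by
      rw [integral_const_mul, integral_add (integrable_sq_norm_mul_exp_neg_mul_sq_norm hc)
        ((integrable_exp_neg_mul_sq_norm hc).const_mul _), integral_const_mul,
        integral_sq_norm_mul_exp_neg_mul_sq_norm hc,
        GaussianFourier.integral_rexp_neg_mul_sq_norm hc]
      ring

theorem integral_norm_sub_sq_mul_exp_neg_mul_norm_sub_sq (hc : 0 < c) (p m : V) :
    ∫ x : V, ‖x - p‖ ^ 2 * rexp (-c * ‖x - m‖ ^ 2) =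
      (Module.finrank ℝ V / (2 * c) + ‖m - p‖ ^ 2) * (π / c) ^ (Module.finrank ℝ V / 2 : ℝ) := by
  rw [← integral_norm_add_sq_mul_exp_neg_mul_sq_norm hc,
    ← integral_sub_right_eq_self (fun v => ‖v + (m - p)‖ ^ 2 * rexp (-c * ‖v‖ ^ 2)) m]
  simp only [sub_add_sub_cancel]

theorem integrable_norm_sub_sq_mul_exp_neg_mul_norm_sub_sq (hc : 0 < c) (p m : V) :
    Integrable fun x : V => ‖x - p‖ ^ 2 * rexp (-c * ‖x - m‖ ^ 2) := by
  simpa only [sub_add_sub_cancel] using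
    (integrable_norm_add_sq_mul_exp_neg_mul_sq_norm hc (m - p)).comp_sub_right m

end GaussianMoments

theorem mul_norm_sub_sq_add_mul_norm_sub_sq_s11 {V : Type*} [NormedAddCommGroup V]
    [InnerProductSpace ℝ V] {a b : ℝ} (hab : a + b ≠ 0) (x p q : V) :
    a * ‖x - p‖ ^ 2 + b * ‖x - q‖ ^ 2 =
      (a + b) * ‖x - (p + (b / (a + b)) • (q - p))‖ ^ 2 + a * b / (a + b) * ‖q - p‖ ^ 2 := by
  have hq : ‖x - q‖ ^ 2 = ‖x - p‖ ^ 2 - 2 * inner ℝ (x - p) (q - p) + ‖q - p‖ ^ 2 := by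
    rw [← norm_sub_sq_real, sub_sub_sub_cancel_right]
  have hm : ‖x - (p + (b / (a + b)) • (q - p))‖ ^ 2 = ‖x - p‖ ^ 2 -
      2 * (b / (a + b) * inner ℝ (x - p) (q - p)) + (b / (a + b)) ^ 2 * ‖q - p‖ ^ 2 := by
    rw [← sub_sub, norm_sub_sq_real, real_inner_smul_right, norm_smul, mul_pow,
      Real.norm_eq_abs, sq_abs]
  rw [hq, hm]
  field_simp
  ring

theorem exp_neg_mul_add_le_of_quadratic_lower_bound {V : Type*} [NormedAddCommGroup V]
    [InnerProductSpace ℝ V] {f : V → ℝ} {p q x : V} {a b β : ℝ} (hβ : 0 ≤ β) (hab : a + b ≠ 0)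
    (hf : f p + a * ‖x - p‖ ^ 2 ≤ f x) :
    rexp (-(β * (f x + b * ‖x - q‖ ^ 2))) ≤
      rexp (-(β * (f p + a * b / (a + b) * ‖q - p‖ ^ 2))) *
        rexp (-(β * (a + b)) * ‖x - (p + (b / (a + b)) • (q - p))‖ ^ 2) := by
  rw [← exp_add, exp_le_exp]
  have hsq := mul_norm_sub_sq_add_mul_norm_sub_sq_s11 hab x p q
  have hlower : f p + a * b / (a + b) * ‖q - p‖ ^ 2 +
      (a + b) * ‖x - (p + (b / (a + b)) • (q - p))‖ ^ 2 ≤ f x + b * ‖x - q‖ ^ 2 := by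
    linarith
  nlinarith [mul_le_mul_of_nonneg_left hlower hβ]

theorem Ephi_sq_upper_bound_general
    (d : ℕ)
    (f : EuclideanSpace ℝ (Fin d) → ℝ)
    (xs : EuclideanSpace ℝ (Fin d)) (l : ℝ) (hl : 0 < l)
    (hlow : ∀ x, f xs + l / 2 * ‖x - xs‖ ^ 2 ≤ f x)
    (k : ℕ) (lam ρ : ℝ) (hlam : 0 < lam) (hρ0 : 0 < ρ)
    (xk : EuclideanSpace ℝ (Fin d))
    (Eφ2 : ℝ)
    (hEφ2 : Eφ2 = ((ρ ^ k)⁻¹ * lam / (2 * π)) ^ ((d : ℝ) / 2) *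
      ∫ x : EuclideanSpace ℝ (Fin d),
        ‖x - xs‖ ^ 2 * Real.exp (-(2 * (ρ ^ k)⁻¹ * f x)) *
          Real.exp (-((ρ ^ k)⁻¹ * lam * ‖x - xk‖ ^ 2 / 2))) :
    Eφ2 ≤ Real.exp (-(2 * (ρ ^ k)⁻¹ * f xs)) * (lam / (2 * l + lam)) ^ ((d : ℝ) / 2) *
        Real.exp (-((ρ ^ k)⁻¹ * l * lam * ‖xk - xs‖ ^ 2 / (2 * l + lam))) *
        (ρ ^ k * d / (2 * l + lam) + lam ^ 2 * ‖xk - xs‖ ^ 2 / (2 * l + lam) ^ 2) := by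
  set β := (ρ ^ k)⁻¹
  have hβ : 0 < β := inv_pos.2 (pow_pos hρ0 k)
  have hab : l / 2 + lam / 4 ≠ 0 := by positivity
  set c := 2 * β * (l / 2 + lam / 4)
  set m := xs + (lam / 4 / (l / 2 + lam / 4)) • (xk - xs)
  set D := rexp (-(2 * β * (f xs + l / 2 * (lam / 4) / (l / 2 + lam / 4) * ‖xk - xs‖ ^ 2)))
  have hbound (x : EuclideanSpace ℝ (Fin d)) :
      ‖x - xs‖ ^ 2 * rexp (-(2 * β * f x)) * rexp (-(β * lam * ‖x - xk‖ ^ 2 / 2)) ≤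
        D * (‖x - xs‖ ^ 2 * rexp (-c * ‖x - m‖ ^ 2)) := by
    calc _ = ‖x - xs‖ ^ 2 * rexp (-(2 * β * (f x + lam / 4 * ‖x - xk‖ ^ 2))) := by
          rw [mul_assoc, ← exp_add]; ring_nf
      _ ≤ ‖x - xs‖ ^ 2 * (D * rexp (-c * ‖x - m‖ ^ 2)) := by
          gcongr; exact exp_neg_mul_add_le_of_quadratic_lower_bound (by positivity) hab (hlow x)
      _ = _ := by ring
  have hc : 0 < c := by positivity
  have hint := integral_mono_of_nonneg (.of_forall fun x => by positivity)
    ((integrable_norm_sub_sq_mul_exp_neg_mul_norm_sub_sq hc xs m).const_mul _)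
    (.of_forall hbound)
  rw [integral_const_mul, integral_norm_sub_sq_mul_exp_neg_mul_norm_sub_sq hc,
    finrank_euclideanSpace_fin] at hint
  rw [hEφ2]
  refine (mul_le_mul_of_nonneg_left hint (by positivity)).trans_eq ?_
  have hD : D = rexp (-(2 * β * f xs)) *
      rexp (-(β * l * lam * ‖xk - xs‖ ^ 2 / (2 * l + lam))) := by
    rw [← exp_add]; simp only [D]; congr 1; field_simp; ring
  have hm : ‖m - xs‖ ^ 2 = (lam / (2 * l + lam)) ^ 2 * ‖xk - xs‖ ^ 2 := by
    rw [add_sub_cancel_left, norm_smul, mul_pow, Real.norm_eq_abs, sq_abs]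
    congr 2; field_simp; ring
  have hpow : (β * lam / (2 * π)) ^ ((d : ℝ) / 2) * (π / c) ^ ((d : ℝ) / 2) =
      (lam / (2 * l + lam)) ^ ((d : ℝ) / 2) := by
    rw [← mul_rpow (by positivity) (by positivity)]
    congr 1; field_simp; ring
  rw [hD, hm, ← hpow, show ρ ^ k = β⁻¹ from (inv_inv _).symm]
  field_simp
  ring

/-- Upper bound for `E[φ_k²]` (from the proof of Lemma 3.4). -/
theorem Ephi_sq_upper_bound
    (d : ℕ) (hd : 1 ≤ d)
    (f : EuclideanSpace ℝ (Fin d) → ℝ) (hf : Measurable f)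
    (xs : EuclideanSpace ℝ (Fin d)) (l L : ℝ) (hl : 0 < l) (hlL : l ≤ L)
    (hlow : ∀ x, f xs + l / 2 * ‖x - xs‖ ^ 2 ≤ f x)
    (hup : ∀ x, f x ≤ f xs + L / 2 * ‖x - xs‖ ^ 2)
    (k : ℕ) (lam ρ : ℝ) (hlam : 0 < lam) (hρ0 : 0 < ρ) (hρ1 : ρ < 1)
    (xk : EuclideanSpace ℝ (Fin d))
    (Eφ2 : ℝ)
    (hEφ2 : Eφ2 = ((ρ ^ k)⁻¹ * lam / (2 * π)) ^ ((d : ℝ) / 2) *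
      ∫ x : EuclideanSpace ℝ (Fin d),
        ‖x - xs‖ ^ 2 * Real.exp (-(2 * (ρ ^ k)⁻¹ * f x)) *
          Real.exp (-((ρ ^ k)⁻¹ * lam * ‖x - xk‖ ^ 2 / 2))) :
    Eφ2 ≤ Real.exp (-(2 * (ρ ^ k)⁻¹ * f xs)) * (lam / (2 * l + lam)) ^ ((d : ℝ) / 2) *
        Real.exp (-((ρ ^ k)⁻¹ * l * lam * ‖xk - xs‖ ^ 2 / (2 * l + lam))) *
        (ρ ^ k * d / (2 * l + lam) + lam ^ 2 * ‖xk - xs‖ ^ 2 / (2 * l + lam) ^ 2) :=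
  Ephi_sq_upper_bound_general d f xs l hl hlow k lam ρ hlam hρ0 xk Eφ2 hEφ2
end
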